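/- If φ and g are integrable on (0,∞), then the Fourier sine–cosine generalized convolution φ ∗_{F_s,F_c} g is integrable on (0,∞) and ‖φ ∗_{F_s,F_c} g‖_{L_1(0,∞)} ≤ 2√(2/π)·‖φ‖_{L_1(0,∞)}·‖g‖_{L_1(0,∞)}. -/

import Mathlib

/-!
Extend `Φ` and `g` by zero to functions `F`, `G` on `ℝ`. For `x > 0` and almost every `u > 0`
one has `g |x - u| = G (x - u) + G (u - x)` and `g (x + u) = G (x + u)`, so on `(0, ∞)` the
sine–cosine convolution is `(2π)^(-1/2) (F ⋆ G + F ⋆ Ǧ - F̌ ⋆ G)`, a combination of three ordinary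
convolutions on `ℝ`, where `Ǧ t = G (-t)` and `F̌ t = F (-t)`. By Young's inequality each has
`L¹` norm at most `‖Φ‖₁ ‖g‖₁`, and `3 / √(2π) ≤ 4 / √(2π) = 2 √(2/π)`.
-/

open MeasureTheory Real Set

/-- The kernel function φ(x,u,v). -/
noncomputable def phiKer (x u v : ℝ) : ℝ :=
  Real.exp (-v * Real.cosh (x + u - 1)) + Real.exp (-v * Real.cosh (x - u + 1))
    - Real.exp (-v * Real.cosh (x + u + 1)) - Real.exp (-v * Real.cosh (x - u - 1))

/-- The modified Bessel function of the second kind of order zero. -/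
noncomputable def K0 (v : ℝ) : ℝ := ∫ t in Set.Ioi (0 : ℝ), Real.exp (-v * Real.cosh t)

/-- The trigonometric-weighted generalized convolution (f ⋆ g). -/
noncomputable def gconv (f g : ℝ → ℝ) (x : ℝ) : ℝ :=
  (1 / 4) * ∫ v in Set.Ioi (0 : ℝ), ∫ u in Set.Ioi (0 : ℝ), phiKer x u v * f u * g v

/-- Fourier cosine transform. -/
noncomputable def Fc (f : ℝ → ℝ) (y : ℝ) : ℝ :=
  Real.sqrt (2 / Real.pi) * ∫ x in Set.Ioi (0 : ℝ), f x * Real.cos (x * y)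

/-- Fourier sine transform. -/
noncomputable def Fs (f : ℝ → ℝ) (y : ℝ) : ℝ :=
  Real.sqrt (2 / Real.pi) * ∫ x in Set.Ioi (0 : ℝ), f x * Real.sin (x * y)

/-- Modified Bessel function K_{iy}(x). -/
noncomputable def Kiy (y x : ℝ) : ℝ :=
  ∫ u in Set.Ioi (0 : ℝ), Real.exp (-x * Real.cosh u) * Real.cos (y * u)

/-- Kontorovich–Lebedev transform. -/
noncomputable def KL (g : ℝ → ℝ) (y : ℝ) : ℝ := ∫ x in Set.Ioi (0 : ℝ), Kiy y x * g x

/-- Fourier cosine convolution. -/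
noncomputable def fcConv (f g : ℝ → ℝ) (x : ℝ) : ℝ :=
  (1 / Real.sqrt (2 * Real.pi)) * ∫ u in Set.Ioi (0 : ℝ), f u * (g |x - u| + g (x + u))

/-- Fourier sine–cosine generalized convolution. -/
noncomputable def fscConv (f g : ℝ → ℝ) (x : ℝ) : ℝ :=
  (1 / Real.sqrt (2 * Real.pi)) * ∫ u in Set.Ioi (0 : ℝ), f u * (g |x - u| - g (x + u))

open scoped Convolution
open ContinuousLinearMap (lsmul)

section Convolution

variable {G : Type*} [MeasurableSpace G] [AddGroup G] [MeasurableAdd₂ G] [MeasurableNeg G]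
  {μ : Measure G} [SFinite μ] [μ.IsAddRightInvariant] {f g : G → ℝ}

theorem integral_abs_convolution_le (hf : Integrable f μ) (hg : Integrable g μ) :
    ∫ x, |(f ⋆[lsmul ℝ ℝ, μ] g) x| ∂μ ≤ (∫ x, |f x| ∂μ) * ∫ x, |g x| ∂μ := by
  have hle : ∀ x, |(f ⋆[lsmul ℝ ℝ, μ] g) x| ≤ ((|f ·|) ⋆[lsmul ℝ ℝ, μ] (|g ·|)) x := fun x => by
    simpa only [convolution_def, ContinuousLinearMap.lsmul_apply, smul_eq_mul, Real.norm_eq_abs,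
      abs_mul] using norm_integral_le_integral_norm (μ := μ) fun t => f t * g (x - t)
  calc _ ≤ ∫ x, ((|f ·|) ⋆[lsmul ℝ ℝ, μ] (|g ·|)) x ∂μ :=
        integral_mono (hf.integrable_convolution _ hg).abs
          (hf.abs.integrable_convolution _ hg.abs) hle
    _ = _ := integral_convolution _ hf.abs hg.abs

theorem integral_abs_convolution_add_sub_le [μ.IsNegInvariant] (hf : Integrable f μ)
    (hg : Integrable g μ) :
    ∫ x, |(f ⋆[lsmul ℝ ℝ, μ] g) x + (f ⋆[lsmul ℝ ℝ, μ] fun t => g (-t)) x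
        - ((fun t => f (-t)) ⋆[lsmul ℝ ℝ, μ] g) x| ∂μ
      ≤ 3 * ((∫ x, |f x| ∂μ) * ∫ x, |g x| ∂μ) := by
  have hA := hf.integrable_convolution (lsmul ℝ ℝ) hg
  have hB := hf.integrable_convolution (lsmul ℝ ℝ) hg.comp_neg
  have hC := hf.comp_neg.integrable_convolution (lsmul ℝ ℝ) hg
  calc _ ≤ ∫ x, |(f ⋆[lsmul ℝ ℝ, μ] g) x| + |(f ⋆[lsmul ℝ ℝ, μ] fun t => g (-t)) x|
          + |((fun t => f (-t)) ⋆[lsmul ℝ ℝ, μ] g) x| ∂μ :=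
        integral_mono ((hA.add hB).sub hC).abs ((hA.abs.fun_add hB.abs).fun_add hC.abs)
          fun x => (abs_sub _ _).trans (add_le_add_left (abs_add_le _ _) _)
    _ = _ := by rw [integral_add (hA.abs.fun_add hB.abs) hC.abs, integral_add hA.abs hB.abs]
    _ ≤ 3 * ((∫ x, |f x| ∂μ) * ∫ x, |g x| ∂μ) := by
      have hB' := integral_abs_convolution_le (μ := μ) hf hg.comp_neg
      have hC' := integral_abs_convolution_le (μ := μ) hf.comp_neg hg
      rw [integral_neg_eq_self (|g ·|)] at hB'
      rw [integral_neg_eq_self (|f ·|)] at hC'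
      linarith [integral_abs_convolution_le hf hg]

end Convolution

theorem integral_abs_indicator {α : Type*} [MeasurableSpace α] {μ : Measure α} {s : Set α}
    (hs : MeasurableSet s) (f : α → ℝ) : ∫ x, |s.indicator f x| ∂μ = ∫ x in s, |f x| ∂μ := by
  simp_rw [← Real.norm_eq_abs, norm_indicator_eq_indicator_norm]
  exact integral_indicator hs

theorem indicator_Ioi_add_indicator_Ioi_neg (g : ℝ → ℝ) {t : ℝ} (ht : t ≠ 0) :
    (Ioi 0).indicator g t + (Ioi 0).indicator g (-t) = g |t| := by
  rcases ht.lt_or_gt with ht | ht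
  · simp [ht, ht.not_gt, abs_of_neg ht]
  · simp [ht, ht.le, abs_of_pos ht]

theorem fscConv_eq_convolution {Φ g : ℝ → ℝ} {x : ℝ} (hx : 0 < x)
    (hA : ConvolutionExistsAt ((Ioi 0).indicator Φ) ((Ioi 0).indicator g) x (lsmul ℝ ℝ))
    (hB : ConvolutionExistsAt ((Ioi 0).indicator Φ) (fun t => (Ioi 0).indicator g (-t)) x
      (lsmul ℝ ℝ))
    (hC : ConvolutionExistsAt (fun t => (Ioi 0).indicator Φ (-t)) ((Ioi 0).indicator g) x
      (lsmul ℝ ℝ)) :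
    fscConv Φ g x = 1 / √(2 * π) * (((Ioi 0).indicator Φ ⋆ (Ioi 0).indicator g) x
      + ((Ioi 0).indicator Φ ⋆ fun t => (Ioi 0).indicator g (-t)) x
      - ((fun t => (Ioi 0).indicator Φ (-t)) ⋆ (Ioi 0).indicator g) x) := by
  set F := (Ioi (0 : ℝ)).indicator Φ
  set G := (Ioi (0 : ℝ)).indicator g
  simp only [ConvolutionExistsAt, ContinuousLinearMap.lsmul_apply, smul_eq_mul] at hA hB hC
  have hC' : Integrable (fun u => F u * G (x + u)) := by
    simpa only [neg_neg, sub_neg_eq_add] using hC.comp_neg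
  have hpt : ∀ᵐ u, (Ioi 0).indicator (fun u => Φ u * (g |x - u| - g (x + u))) u
      = F u * G (x - u) + F u * G (-(x - u)) - F u * G (x + u) := by
    filter_upwards [volume.ae_ne x] with u hu
    by_cases hu0 : 0 < u
    · have hxu : 0 < x + u := add_pos hx hu0
      simp only [F, G, indicator_of_mem (mem_Ioi.2 hu0), indicator_of_mem (mem_Ioi.2 hxu),
        ← mul_add, ← mul_sub, indicator_Ioi_add_indicator_Ioi_neg g (sub_ne_zero.2 hu.symm)]
    · simp [F, hu0]
  rw [fscConv, ← integral_indicator measurableSet_Ioi, integral_congr_ae hpt,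
    integral_sub (hA.fun_add hB) hC', integral_add hA hB]
  simp only [convolution_def, ContinuousLinearMap.lsmul_apply, smul_eq_mul]
  congr 2
  simpa only [neg_neg, sub_neg_eq_add] using
    integral_neg_eq_self (fun u => F (-u) * G (x - u)) volume

theorem three_div_sqrt_two_pi_le : 3 * (1 / √(2 * π)) ≤ 2 * √(2 / π) := by
  have hs : 0 < √(2 * π) := by positivity
  have h : √(2 / π) = 2 / √(2 * π) := by
    rw [eq_div_iff hs.ne', ← sqrt_mul (by positivity),
      show 2 / π * (2 * π) = 2 ^ 2 by field_simp, sqrt_sq zero_le_two]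
  rw [h]
  field_simp
  norm_num

theorem fscConv_L1_bound (Φ g : ℝ → ℝ)
    (hΦ : MeasureTheory.IntegrableOn Φ (Set.Ioi 0))
    (hg : MeasureTheory.IntegrableOn g (Set.Ioi 0)) :
    MeasureTheory.IntegrableOn (fscConv Φ g) (Set.Ioi 0) ∧
    (∫ x in Set.Ioi (0 : ℝ), |fscConv Φ g x|) ≤
      2 * Real.sqrt (2 / Real.pi) * (∫ x in Set.Ioi (0 : ℝ), |Φ x|) *
        (∫ x in Set.Ioi (0 : ℝ), |g x|) := by
  set F := (Ioi (0 : ℝ)).indicator Φ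
  set G := (Ioi (0 : ℝ)).indicator g
  have hF : Integrable F := (integrable_indicator_iff measurableSet_Ioi).2 hΦ
  have hG : Integrable G := (integrable_indicator_iff measurableSet_Ioi).2 hg
  set H : ℝ → ℝ := fun x => (F ⋆ G) x + (F ⋆ fun t => G (-t)) x - ((fun t => F (-t)) ⋆ G) x
  have hH : Integrable H := ((hF.integrable_convolution _ hG).add
    (hF.integrable_convolution _ hG.comp_neg)).sub (hF.comp_neg.integrable_convolution _ hG)
  have hrepr : fscConv Φ g =ᵐ[volume.restrict (Ioi 0)] fun x => 1 / √(2 * π) * H x := by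
    refine (ae_restrict_iff' measurableSet_Ioi).2 ?_
    filter_upwards [hF.ae_convolution_exists (lsmul ℝ ℝ) hG,
      hF.ae_convolution_exists (lsmul ℝ ℝ) hG.comp_neg,
      hF.comp_neg.ae_convolution_exists (lsmul ℝ ℝ) hG] with x hA hB hC hx
    exact fscConv_eq_convolution hx hA hB hC
  refine ⟨(hH.const_mul _).integrableOn.congr hrepr.symm, ?_⟩
  calc ∫ x in Ioi 0, |fscConv Φ g x| = ∫ x in Ioi 0, |1 / √(2 * π) * H x| :=
        integral_congr_ae (hrepr.fun_comp abs)
    _ ≤ ∫ x, |1 / √(2 * π) * H x| :=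
        setIntegral_le_integral (hH.const_mul _).abs (ae_of_all _ fun _ => abs_nonneg _)
    _ = 1 / √(2 * π) * ∫ x, |H x| := by
        simp_rw [abs_mul, abs_of_pos (by positivity : (0 : ℝ) < 1 / √(2 * π)), integral_const_mul]
    _ ≤ 1 / √(2 * π) * (3 * ((∫ x, |F x|) * ∫ x, |G x|)) := by
        gcongr; exact integral_abs_convolution_add_sub_le hF hG
    _ ≤ 2 * √(2 / π) * (∫ x, |F x|) * ∫ x, |G x| := by
        rw [← mul_assoc, ← mul_assoc, mul_comm _ (3 : ℝ)]
        gcongr ?_ * _ * _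
        exact three_div_sqrt_two_pi_le
    _ = _ := by
        rw [integral_abs_indicator measurableSet_Ioi, integral_abs_indicator measurableSet_Ioi]
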